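/- arXiv:1505.06849 — 2 statements merged into one kernel-verified Lean document; each statement's English description precedes it below -/
import Mathlib

section
/- Let A_δ be the n×n simple perturbed PCM and λ its Perron eigenvalue. Then the vector w with w_1 = λ−1+δ, w_2 = (1/x_1)·(λ−1+1/δ), and w_i = (1/x_{i-1})·λ·(λ−2)/(n−2) for i = 3,…,n, is a positive eigenvector of A_δ corresponding to λ (i.e., A_δ·w = λ·w). -/
/-!
With `D = diagonal x` and `x 0 = 1`, the matrix `A_δ` is `D⁻¹ B D`, where `B` is `A_δ` at
`x = 1`: all entries `1` except `δ` and `1 / δ` in positions (1,2) and (2,1). Hence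
`w = D⁻¹ u` for an eigenvector `u` of `B`. In the first two rows `B u = λ u` holds
identically in `λ`; every other row is `(n - 2) (u₁ + u₂ + λ(λ - 2)) = λ²(λ - 2)`, which is the
cubic satisfied by `λ`.
-/

/-- A pairwise comparison matrix: positive entries with the reciprocal property. -/
def IsPCM {n : ℕ} (A : Matrix (Fin n) (Fin n) ℝ) : Prop :=
  (∀ i j, 0 < A i j) ∧ (∀ i j, A j i = 1 / A i j)

/-- A PCM is consistent if `a i k * a k j = a i j` for all `i j k`. -/
def IsConsistent {n : ℕ} (A : Matrix (Fin n) (Fin n) ℝ) : Prop :=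
  ∀ i j k, A i k * A k j = A i j

/-- `lam` together with a positive eigenvector `w` forms the Perron eigenpair of `A`
(for a positive matrix, the eigenvalue admitting a positive eigenvector is exactly
the Perron (maximal) eigenvalue). -/
def IsPerronEigenpair {n : ℕ} (A : Matrix (Fin n) (Fin n) ℝ) (lam : ℝ)
    (w : Fin n → ℝ) : Prop :=
  (∀ i, 0 < w i) ∧ A.mulVec w = lam • w

/-- The simple perturbed PCM `A_δ`: the consistent PCM generated by positive weights
`x` (with `x 0 = 1`), whose entry in position (1,2) (0-based: (0,1)) is multiplied
by `δ` and its reciprocal by `1/δ`. -/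
noncomputable def simplePerturbed {n : ℕ} (x : Fin n → ℝ) (δ : ℝ) : Matrix (Fin n) (Fin n) ℝ :=
  fun i j =>
    if i.val = 0 ∧ j.val = 1 then x j * δ
    else if i.val = 1 ∧ j.val = 0 then 1 / (x i * δ)
    else x j / x i

/-- A positive weight vector `w` is efficient for `A` if no positive vector `w'`
approximates every entry at least as well, and some entry strictly better. -/
def IsEfficient {n : ℕ} (A : Matrix (Fin n) (Fin n) ℝ) (w : Fin n → ℝ) : Prop :=
  ¬ ∃ w' : Fin n → ℝ, (∀ i, 0 < w' i) ∧
      (∀ i j, |A i j - w' i / w' j| ≤ |A i j - w i / w j|) ∧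
      (∃ k l, |A k l - w' k / w' l| < |A k l - w k / w l|)

open Matrix

theorem Matrix.diagonal_inv_conj_mulVec {K ι : Type*} [Field K] [Fintype ι] [DecidableEq ι]
    (M : Matrix ι ι K) {x : ι → K} (hx : ∀ i, x i ≠ 0) (u : ι → K) :
    (diagonal x⁻¹ * M * diagonal x) *ᵥ (x⁻¹ * u) = x⁻¹ * (M *ᵥ u) := by
  have hcancel : diagonal x *ᵥ (x⁻¹ * u) = u := by
    ext i
    simp [mulVec_diagonal, hx i]
  rw [← mulVec_mulVec, ← mulVec_mulVec, hcancel]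
  ext i
  simp [mulVec_diagonal]

theorem simplePerturbed_eq_diagonal_conj {n : ℕ} (x : Fin n → ℝ)
    (hx0 : ∀ i : Fin n, i.val = 0 → x i = 1) (δ : ℝ) :
    simplePerturbed x δ = diagonal x⁻¹ * simplePerturbed 1 δ * diagonal x := by
  ext i j
  simp only [mul_diagonal, diagonal_mul, simplePerturbed, Pi.one_apply, Pi.inv_apply]
  split_ifs with h01 h10
  · rw [hx0 i h01.1]
    ring
  · rw [hx0 j h10.2]
    field_simp
  · ring

/-- The paper's eigenvector `w` of `simplePerturbed x δ` is `x⁻¹ * perturbedEigvec n δ lam`. -/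
noncomputable def perturbedEigvec (n : ℕ) (δ lam : ℝ) : Fin n → ℝ := fun i =>
  if i.val = 0 then lam - 1 + δ
  else if i.val = 1 then lam - 1 + 1 / δ
  else lam * (lam - 2) / ((n : ℝ) - 2)

theorem perturbedEigvec_pos {n : ℕ} (hn : 3 ≤ n) {δ lam : ℝ} (hδ : 0 < δ) (hlam : 2 < lam)
    (i : Fin n) : 0 < perturbedEigvec n δ lam i := by
  have hn2 : (0 : ℝ) < n - 2 := by
    have : (3 : ℝ) ≤ n := by exact_mod_cast hn
    linarith
  unfold perturbedEigvec
  split_ifs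
  · linarith
  · have : 0 < 1 / δ := by positivity
    linarith
  · have : 0 < lam - 2 := by linarith
    positivity

theorem simplePerturbed_one_mulVec_perturbedEigvec {n : ℕ} (hn : 3 ≤ n) {δ lam : ℝ} (hδ : δ ≠ 0)
    (hcubic : lam ^ 3 - n * lam ^ 2 - ((n : ℝ) - 2) * (δ + 1 / δ - 2) = 0) :
    simplePerturbed 1 δ *ᵥ perturbedEigvec n δ lam = lam • perturbedEigvec n δ lam := by
  obtain ⟨m, rfl⟩ : ∃ m, n = m + 3 := ⟨n - 3, by omega⟩
  push_cast at hcubic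
  have hm : (m : ℝ) + 3 - 2 = m + 1 := by ring
  have hmiddle : ((m : ℝ) + 1) * (lam * (lam - 2) / (m + 1)) = lam * (lam - 2) :=
    mul_div_cancel₀ _ (by positivity)
  funext i
  refine Fin.cases ?_ (fun i => Fin.cases ?_ (fun k => ?_) i) i <;>
    simp only [mulVec, dotProduct, Fin.sum_univ_succ, simplePerturbed, perturbedEigvec,
      Pi.one_apply, Pi.smul_apply, smul_eq_mul, Fin.succ_zero_eq_one, Fin.coe_ofNat_eq_mod,
      Nat.zero_mod, Nat.one_mod, Fin.val_succ, Fin.val_eq_zero_iff, Fin.succ_ne_zero,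
      Nat.add_eq_zero_iff, Nat.add_eq_right, zero_ne_one, one_ne_zero, true_and, false_and,
      and_false, and_self, ↓reduceIte, ne_eq, not_false_eq_true, div_self, one_mul, one_div,
      mul_ite, ite_mul, Finset.sum_const, Finset.card_univ, Fintype.card_fin, nsmul_eq_mul,
      Nat.cast_add, Nat.cast_ofNat, Nat.cast_one, hm, hmiddle]
  · field_simp
    ring
  · field_simp
    ring
  · rw [← mul_div_assoc, eq_div_iff (by positivity)]
    linear_combination -hcubic

theorem explicit_perron_eigenvector_general {n : ℕ} (hn : 3 ≤ n)
    (x : Fin n → ℝ) (hx : ∀ i, 0 < x i) (hx0 : ∀ i : Fin n, i.val = 0 → x i = 1)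
    (δ : ℝ) (hδ : 0 < δ)
    (lam : ℝ)
    (hgt : (n : ℝ) < lam)
    (hcubic : lam ^ 3 - n * lam ^ 2 - ((n : ℝ) - 2) * (δ + 1 / δ - 2) = 0)
    (w : Fin n → ℝ)
    (hw : ∀ i : Fin n, w i =
      if i.val = 0 then lam - 1 + δ
      else if i.val = 1 then (1 / x i) * (lam - 1 + 1 / δ)
      else (1 / x i) * lam * (lam - 2) / ((n : ℝ) - 2)) :
    IsPerronEigenpair (simplePerturbed x δ) lam w := by
  have hlam : 2 < lam := by
    have : (3 : ℝ) ≤ n := by exact_mod_cast hn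
    linarith
  have hw_eq : w = x⁻¹ * perturbedEigvec n δ lam := by
    funext i
    rw [hw i, Pi.mul_apply, Pi.inv_apply, perturbedEigvec]
    split_ifs with h0
    · rw [hx0 i h0, inv_one, one_mul]
    · ring
    · ring
  rw [hw_eq, simplePerturbed_eq_diagonal_conj x hx0]
  refine ⟨fun i => mul_pos (inv_pos.2 (hx i)) (perturbedEigvec_pos hn hδ hlam i), ?_⟩
  rw [diagonal_inv_conj_mulVec _ (fun i => (hx i).ne'),
    simplePerturbed_one_mulVec_perturbedEigvec hn hδ.ne' hcubic, mul_smul_comm]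

/-- The explicit vector w₁ = λ−1+δ, w₂ = (1/x₁)(λ−1+1/δ),
wᵢ = (1/x_{i-1})·λ(λ−2)/(n−2) (i ≥ 3) is a positive eigenvector of A_δ for λ. -/
theorem explicit_perron_eigenvector {n : ℕ} (hn : 3 ≤ n)
    (x : Fin n → ℝ) (hx : ∀ i, 0 < x i) (hx0 : ∀ i : Fin n, i.val = 0 → x i = 1)
    (δ : ℝ) (hδ : 0 < δ) (hδ1 : δ ≠ 1)
    (lam : ℝ) (hlam : ∃ v, IsPerronEigenpair (simplePerturbed x δ) lam v)
    (hgt : (n : ℝ) < lam)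
    (hcubic : lam ^ 3 - n * lam ^ 2 - ((n : ℝ) - 2) * (δ + 1 / δ - 2) = 0)
    (w : Fin n → ℝ)
    (hw : ∀ i : Fin n, w i =
      if i.val = 0 then lam - 1 + δ
      else if i.val = 1 then (1 / x i) * (lam - 1 + 1 / δ)
      else (1 / x i) * lam * (lam - 2) / ((n : ℝ) - 2)) :
    IsPerronEigenpair (simplePerturbed x δ) lam w :=
  explicit_perron_eigenvector_general hn x hx hx0 δ hδ lam hgt hcubic w hw
end

section
/- Let A_δ be the simple perturbed PCM with Perron eigenvalue λ and Perron eigenvector w (with w_1 = λ(λ−n+1) and w_j = (1/x_{j-1})(λ−1+1/δ) for j ≥ 3, up to scaling). For every j ∈ {3,…,n}: if δ > 1 then w_1/w_j > a_{1j} = x_{j-1}, and if δ < 1 then w_1/w_j < a_{1j}. -/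
/-! With `S = ∑ j, x j * v j` for the Perron vector `v`, every row `i ≥ 2` of `A_δ` reads
`λ x_i v_i = S`. Summing these, and using row 1, `λ x_1 v_1 = S + (1/δ - 1) v_0`, gives
`(λ - n + 1) S = (λ - 1 + 1/δ) v_0`; so the quotient in the statement is `x_j · λ v_0 / S`.
Row 0, `λ v_0 = S + (δ - 1) x_1 v_1`, then shows that `λ v_0 / S - 1` has the sign of `δ - 1`. -/

open Matrix

lemma simplePerturbed_apply_of_ne {n : ℕ} (x : Fin n → ℝ) (δ : ℝ) {i j : Fin n}
    (h₀₁ : ¬(i.val = 0 ∧ j.val = 1)) (h₁₀ : ¬(i.val = 1 ∧ j.val = 0)) :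
    simplePerturbed x δ i j = x j / x i := by
  simp only [simplePerturbed, if_neg h₀₁, if_neg h₁₀]

lemma simplePerturbed_mulVec_of_two_le {n : ℕ} (x : Fin n → ℝ) (δ : ℝ) (v : Fin n → ℝ)
    {i : Fin n} (hi : 2 ≤ i.val) :
    (simplePerturbed x δ *ᵥ v) i = (∑ j, x j * v j) / x i := by
  simp only [mulVec, dotProduct, Finset.sum_div]
  refine Finset.sum_congr rfl fun j _ => ?_
  rw [simplePerturbed_apply_of_ne x δ (by omega) (by omega), div_mul_eq_mul_div]

section
variable {m : ℕ} (x : Fin (m + 2) → ℝ) (δ : ℝ) (v : Fin (m + 2) → ℝ)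

lemma simplePerturbed_zero_one : simplePerturbed x δ 0 1 = x 1 * δ := by
  simp [simplePerturbed]

lemma simplePerturbed_one_zero : simplePerturbed x δ 1 0 = 1 / (x 1 * δ) := by
  simp [simplePerturbed]

lemma simplePerturbed_zero_apply {j : Fin (m + 2)} (hj : j ≠ 1) :
    simplePerturbed x δ 0 j = x j / x 0 :=
  simplePerturbed_apply_of_ne x δ (fun h => hj (Fin.ext h.2)) (fun h => by simp at h)

lemma simplePerturbed_one_apply {j : Fin (m + 2)} (hj : j ≠ 0) :
    simplePerturbed x δ 1 j = x j / x 1 :=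
  simplePerturbed_apply_of_ne x δ (fun h => by simp at h) (fun h => hj (Fin.ext h.2))

lemma simplePerturbed_mulVec_zero (hx0 : x 0 = 1) :
    (simplePerturbed x δ *ᵥ v) 0 = ∑ j, x j * v j + (δ - 1) * (x 1 * v 1) := by
  have hoff : ∀ j ∈ ({1}ᶜ : Finset (Fin (m + 2))),
      simplePerturbed x δ 0 j * v j = x j * v j := fun j hj => by
    rw [simplePerturbed_zero_apply x δ (by simpa using hj), hx0, div_one]
  rw [mulVec, dotProduct, Fintype.sum_eq_add_sum_compl 1, Finset.sum_congr rfl hoff,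
    Fintype.sum_eq_add_sum_compl 1 fun j => x j * v j, simplePerturbed_zero_one]
  ring

lemma simplePerturbed_mulVec_one (hx0 : x 0 = 1) (hx1 : x 1 ≠ 0) :
    x 1 * (simplePerturbed x δ *ᵥ v) 1 = ∑ j, x j * v j + (1 / δ - 1) * v 0 := by
  have hoff : ∀ j ∈ ({0}ᶜ : Finset (Fin (m + 2))),
      simplePerturbed x δ 1 j * v j = x j * v j / x 1 := fun j hj => by
    rw [simplePerturbed_one_apply x δ (by simpa using hj), div_mul_eq_mul_div]
  rw [mulVec, dotProduct, Fintype.sum_eq_add_sum_compl 0, Finset.sum_congr rfl hoff,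
    ← Finset.sum_div, Fintype.sum_eq_add_sum_compl 0 fun j => x j * v j,
    simplePerturbed_one_zero, hx0]
  field_simp
  ring

variable {x δ v} {lam : ℝ}

lemma simplePerturbed_weightedSum_of_mulVec_eq_smul (hx0 : x 0 = 1) (hx : ∀ i, x i ≠ 0)
    (hv : simplePerturbed x δ *ᵥ v = lam • v) :
    (lam - (m + 2) + 1) * ∑ j, x j * v j = (lam - 1 + 1 / δ) * v 0 := by
  set S := ∑ j, x j * v j
  have hrow (i : Fin (m + 2)) : (simplePerturbed x δ *ᵥ v) i = lam * v i := congrFun hv i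
  have hrow₁ := simplePerturbed_mulVec_one x δ v hx0 (hx 1)
  rw [hrow] at hrow₁
  have htail (i : Fin m) : lam * (x i.succ.succ * v i.succ.succ) = S := by
    have h := simplePerturbed_mulVec_of_two_le x δ v (i := i.succ.succ) (by simp)
    rw [hrow, eq_div_iff (hx _)] at h
    linear_combination h
  have hsplit : S = v 0 + x 1 * v 1 + ∑ i : Fin m, x i.succ.succ * v i.succ.succ := by
    simp only [S, Fin.sum_univ_succ, Fin.succ_zero_eq_one, hx0]
    ring
  have hS : lam * S = lam * v 0 + lam * (x 1 * v 1) + m * S := by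
    calc lam * S = lam * v 0 + lam * (x 1 * v 1)
          + ∑ i : Fin m, lam * (x i.succ.succ * v i.succ.succ) := by
          rw [hsplit, mul_add, Finset.mul_sum]; ring
      _ = lam * v 0 + lam * (x 1 * v 1) + m * S := by simp [htail]
  linear_combination hS + hrow₁

lemma simplePerturbed_sub_mul_weightedSum_of_mulVec_eq_smul (hx0 : x 0 = 1) (hx : ∀ i, x i ≠ 0)
    (hv : simplePerturbed x δ *ᵥ v = lam • v) :
    (lam * (lam - (m + 2) + 1) - (lam - 1 + 1 / δ)) * ∑ j, x j * v j
      = (lam - 1 + 1 / δ) * (δ - 1) * (x 1 * v 1) := by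
  have hrow₀ := simplePerturbed_mulVec_zero x δ v hx0
  rw [hv, Pi.smul_apply, smul_eq_mul] at hrow₀
  linear_combination lam * simplePerturbed_weightedSum_of_mulVec_eq_smul hx0 hx hv
    + (lam - 1 + 1 / δ) * hrow₀

end

theorem ratio_w1_wj_vs_a1j_general {n : ℕ}
    (x : Fin n → ℝ) (hx : ∀ i, 0 < x i) (hx0 : ∀ i : Fin n, i.val = 0 → x i = 1)
    (δ : ℝ) (hδ : 0 < δ)
    (lam : ℝ) (hlam : ∃ v, IsPerronEigenpair (simplePerturbed x δ) lam v)
    (hgt : (n : ℝ) < lam) :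
    ∀ j : Fin n, 2 ≤ j.val →
      (1 < δ →
        (lam * (lam - n + 1)) / ((1 / x j) * (lam - 1 + 1 / δ)) > x j) ∧
      (δ < 1 →
        (lam * (lam - n + 1)) / ((1 / x j) * (lam - 1 + 1 / δ)) < x j) := by
  intro j hj
  obtain ⟨m, rfl⟩ : ∃ m, n = m + 2 := ⟨n - 2, by omega⟩
  obtain ⟨v, hv_pos, hv⟩ := hlam
  push_cast at hgt ⊢
  have hc : 0 < lam - 1 + 1 / δ := by linarith [m.cast_nonneg (α := ℝ), one_div_pos.2 hδ]
  have hS : 0 < ∑ i, x i * v i :=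
    Finset.sum_pos (fun i _ => mul_pos (hx i) (hv_pos i)) Finset.univ_nonempty
  have hb : 0 < x 1 * v 1 := mul_pos (hx 1) (hv_pos 1)
  have key := simplePerturbed_sub_mul_weightedSum_of_mulVec_eq_smul (hx0 0 rfl)
    (fun i => (hx i).ne') hv
  have hratio : lam * (lam - (m + 2) + 1) / (1 / x j * (lam - 1 + 1 / δ))
      = x j * (lam * (lam - (m + 2) + 1) / (lam - 1 + 1 / δ)) := by
    field_simp
  rw [hratio]
  refine ⟨fun hδ1 => lt_mul_of_one_lt_right (hx j) ((one_lt_div hc).2 ?_),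
    fun hδ1 => mul_lt_of_lt_one_right (hx j) ((div_lt_one hc).2 ?_)⟩
  · rw [← sub_pos, ← mul_pos_iff_of_pos_right hS, key]
    exact mul_pos (mul_pos hc (sub_pos.2 hδ1)) hb
  · rw [← sub_neg]
    refine neg_of_mul_neg_left ?_ hS.le
    rw [key]
    exact mul_neg_of_neg_of_pos (mul_neg_of_pos_of_neg hc (sub_neg.2 hδ1)) hb

/-- Lemma 3.2: with w₁ = λ(λ−n+1) and w_j = (1/x_{j-1})(λ−1+1/δ)
for j ≥ 3 (up to scaling), for every j ≥ 3: if δ > 1 then w₁/w_j > a₁ⱼ = x_{j-1},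
and if δ < 1 then w₁/w_j < a₁ⱼ. -/
theorem ratio_w1_wj_vs_a1j {n : ℕ} (hn : 3 ≤ n)
    (x : Fin n → ℝ) (hx : ∀ i, 0 < x i) (hx0 : ∀ i : Fin n, i.val = 0 → x i = 1)
    (δ : ℝ) (hδ : 0 < δ) (hδ1 : δ ≠ 1)
    (lam : ℝ) (hlam : ∃ v, IsPerronEigenpair (simplePerturbed x δ) lam v)
    (hgt : (n : ℝ) < lam) :
    ∀ j : Fin n, 2 ≤ j.val →
      (1 < δ →
        (lam * (lam - n + 1)) / ((1 / x j) * (lam - 1 + 1 / δ)) > x j) ∧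
      (δ < 1 →
        (lam * (lam - n + 1)) / ((1 / x j) * (lam - 1 + 1 / δ)) < x j) :=
  ratio_w1_wj_vs_a1j_general x hx hx0 δ hδ lam hlam hgt
end
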